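/- Let M, N : ℝ³ → ℝ be continuous, let φ : ℝ → ℝ be differentiable, and let I : ℝ³ → ℝ be differentiable such that for all (x, y) ∈ ℝ²: N(x,y,φ(x))·∂I/∂x(x,y,φ(x)) + M(x,y,φ(x))·∂I/∂y(x,y,φ(x)) + N(x,y,φ(x))·φ'(x)·∂I/∂z(x,y,φ(x)) = 0. If J ⊆ ℝ is an interval and y : J → ℝ is differentiable with N(x, y(x), φ(x)) ≠ 0 and y'(x) = M(x, y(x), φ(x))/N(x, y(x), φ(x)) for all x ∈ J, then the function x ↦ I(x, y(x), φ(x)) is constant on J. -/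

import Mathlib

/-- Partial derivative in the `x` direction of a function on `ℝ³`. -/
noncomputable def pdX (F : ℝ × ℝ × ℝ → ℝ) (p : ℝ × ℝ × ℝ) : ℝ :=
  fderiv ℝ F p (1, 0, 0)

/-- Partial derivative in the `y` direction. -/
noncomputable def pdY (F : ℝ × ℝ × ℝ → ℝ) (p : ℝ × ℝ × ℝ) : ℝ :=
  fderiv ℝ F p (0, 1, 0)

/-- Partial derivative in the `z` direction. -/
noncomputable def pdZ (F : ℝ × ℝ × ℝ → ℝ) (p : ℝ × ℝ × ℝ) : ℝ :=
  fderiv ℝ F p (0, 0, 1)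

/-!
Along a solution `x ↦ (x, y x, φ x)` the tangent vector is `(1, M/N, φ')`, which is the vector
field `(N, M, N φ')` of the 3D system divided by `N ≠ 0`. By the chain rule the derivative of
`x ↦ I (x, y x, φ x)` is `(1/N)` times the left-hand side of the first-integral equation, hence
zero, and a function with zero derivative on an interval is constant there.
-/

theorem fderiv_apply_eq_pdX_add_pdY_add_pdZ (F : ℝ × ℝ × ℝ → ℝ) (p v : ℝ × ℝ × ℝ) :
    fderiv ℝ F p v = v.1 * pdX F p + v.2.1 * pdY F p + v.2.2 * pdZ F p := by
  have hv : v = v.1 • ((1, 0, 0) : ℝ × ℝ × ℝ) + v.2.1 • (0, 1, 0) + v.2.2 • (0, 0, 1) := by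
    simp
  conv_lhs => rw [hv]
  simp only [map_add, map_smul, smul_eq_mul, pdX, pdY, pdZ]

theorem DifferentiableAt.hasDerivAt_comp_triple {F : ℝ × ℝ × ℝ → ℝ} {f g h : ℝ → ℝ}
    {f' g' h' t : ℝ} (hF : DifferentiableAt ℝ F (f t, g t, h t)) (hf : HasDerivAt f f' t)
    (hg : HasDerivAt g g' t) (hh : HasDerivAt h h' t) :
    HasDerivAt (fun s => F (f s, g s, h s))
      (f' * pdX F (f t, g t, h t) + g' * pdY F (f t, g t, h t) + h' * pdZ F (f t, g t, h t)) t := by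
  have hv := fderiv_apply_eq_pdX_add_pdY_add_pdZ F (f t, g t, h t) (f', g', h')
  exact hv ▸ hF.hasFDerivAt.comp_hasDerivAt t (hf.prodMk (hg.prodMk hh))

theorem Convex.eq_of_hasDerivWithinAt_eq_zero {E : Type*} [NormedAddCommGroup E]
    [NormedSpace ℝ E] {s : Set ℝ} (hs : Convex ℝ s) {f : ℝ → E}
    (hf : ∀ x ∈ s, HasDerivWithinAt f 0 s x) {a b : ℝ} (ha : a ∈ s) (hb : b ∈ s) :
    f a = f b := by
  have h := hs.norm_image_sub_le_of_norm_hasDerivWithin_le (C := 0) hf (by simp) ha hb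
  rw [zero_mul, norm_le_zero_iff, sub_eq_zero] at h
  exact h.symm

theorem invariant_of_1ode_with_function_of_x
    (M N : ℝ × ℝ × ℝ → ℝ)
    (φ : ℝ → ℝ) (hφ : Differentiable ℝ φ)
    (I : ℝ × ℝ × ℝ → ℝ) (hI : Differentiable ℝ I)
    (hpde : ∀ x y : ℝ,
      N (x, y, φ x) * pdX I (x, y, φ x) + M (x, y, φ x) * pdY I (x, y, φ x)
        + N (x, y, φ x) * deriv φ x * pdZ I (x, y, φ x) = 0)
    (J : Set ℝ) (hJ : J.OrdConnected) (y : ℝ → ℝ)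
    (hNne : ∀ x ∈ J, N (x, y x, φ x) ≠ 0)
    (hy : ∀ x ∈ J, HasDerivAt y (M (x, y x, φ x) / N (x, y x, φ x)) x) :
    ∀ a ∈ J, ∀ b ∈ J, I (a, y a, φ a) = I (b, y b, φ b) := by
  intro a ha b hb
  refine hJ.convex.eq_of_hasDerivWithinAt_eq_zero (f := fun x => I (x, y x, φ x))
    (fun x hx => ?_) ha hb
  have hchain := (hI _).hasDerivAt_comp_triple (hasDerivAt_id' x) (hy x hx) (hφ x).hasDerivAt
  have hzero : 1 * pdX I (x, y x, φ x) + M (x, y x, φ x) / N (x, y x, φ x) * pdY I (x, y x, φ x)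
      + deriv φ x * pdZ I (x, y x, φ x) = 0 := by
    field_simp [hNne x hx]
    linear_combination hpde x (y x)
  rw [hzero] at hchain
  exact hchain.hasDerivWithinAt
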